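/- arXiv:1405.7263 — 6 statements merged into one kernel-verified Lean document; each statement's English description precedes it below -/
import Mathlib

section
/- Let T be a cartesian monad on a cartesian category C with terminal object, and let K be a T-operad such that every component k_X : KX → TX of the associated cartesian natural transformation k : K ⇒ T is an epimorphism. Then the functor from T-algebras to K-algebras given by precomposition with k (sending a T-algebra θ : TX → X to θ ∘ k_X : KX → X) is full, faithful, and injective on objects. -/
/-!
Restriction along `k` keeps underlying objects and morphisms, so it is faithful. A morphism of
restricted algebras satisfies the `T`-algebra square after precomposition with `k_X`, and an
algebra structure is determined by its precomposition with `k_X`; since `k_X` is epi, both can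
be cancelled, giving fullness and injectivity on objects.
-/

open CategoryTheory CategoryTheory.Limits

universe v u

namespace CategoryTheory.Monad

variable {C : Type u} [Category.{v} C] {T₁ T₂ : Monad C} (h : T₂ ⟶ T₁)

instance algebraFunctorOfMonadHom_faithful : (algebraFunctorOfMonadHom h).Faithful where
  map_injective hfg := Algebra.Hom.ext (congrArg Algebra.Hom.f hfg :)

variable [∀ X, Epi (h.app X)]

lemma algebraFunctorOfMonadHom_full_of_epi : (algebraFunctorOfMonadHom h).Full where
  map_surjective {A B} f := by
    let g : A.A ⟶ B.A := f.f
    have hg : T₂.map g ≫ h.app B.A ≫ B.a = (h.app A.A ≫ A.a) ≫ g := f.h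
    refine ⟨⟨g, (cancel_epi (h.app A.A)).1 ?_⟩, rfl⟩
    rw [← h.naturality_assoc, hg, Category.assoc]

lemma algebraFunctorOfMonadHom_obj_injective_of_epi :
    Function.Injective (algebraFunctorOfMonadHom h).obj := by
  rintro ⟨X, θ, _, _⟩ ⟨Y, φ, _, _⟩ hθφ
  simp only [algebraFunctorOfMonadHom, Algebra.mk.injEq] at hθφ
  obtain ⟨rfl, hθφ⟩ := hθφ
  obtain rfl : θ = φ := (cancel_epi _).1 (eq_of_heq hθφ)
  rfl

end CategoryTheory.Monad

theorem operad_algebras_contain_T_algebras_general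
    {C : Type u} [Category.{v} C]
    (T K : Monad C)
    -- `K` is a `T`-operad, i.e. a monad equipped with a cartesian map of monads to `T`:
    (k : K ⟶ T)
    -- every component of `k` is an epimorphism:
    (hepi : ∀ X : C, Epi (k.app X)) :
    (Monad.algebraFunctorOfMonadHom k).Full ∧
      (Monad.algebraFunctorOfMonadHom k).Faithful ∧
      Function.Injective (Monad.algebraFunctorOfMonadHom k).obj :=
  ⟨Monad.algebraFunctorOfMonadHom_full_of_epi k, inferInstance,
    Monad.algebraFunctorOfMonadHom_obj_injective_of_epi k⟩

theorem operad_algebras_contain_T_algebras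
    {C : Type u} [Category.{v} C] [HasPullbacks C] [HasTerminal C]
    (T K : Monad C)
    -- `T` is a cartesian monad:
    [PreservesLimitsOfShape WalkingCospan T.toFunctor]
    (hTη : ∀ {X Y : C} (f : X ⟶ Y), IsPullback (T.η.app X) f (T.map f) (T.η.app Y))
    (hTμ : ∀ {X Y : C} (f : X ⟶ Y),
      IsPullback (T.μ.app X) (T.map (T.map f)) (T.map f) (T.μ.app Y))
    -- `K` is a `T`-operad, i.e. a monad equipped with a cartesian map of monads to `T`:
    (k : K ⟶ T)
    (hk : ∀ {X Y : C} (f : X ⟶ Y), IsPullback (k.app X) (K.map f) (T.map f) (k.app Y))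
    -- every component of `k` is an epimorphism:
    (hepi : ∀ X : C, Epi (k.app X)) :
    (Monad.algebraFunctorOfMonadHom k).Full ∧
      (Monad.algebraFunctorOfMonadHom k).Faithful ∧
      Function.Injective (Monad.algebraFunctorOfMonadHom k).obj :=
  operad_algebras_contain_T_algebras_general T K k hepi
end

section
/- Let C be a cocomplete category, let R and S be monads on C with S finitary (preserving filtered colimits), and let p : R ⇒ S be a morphism of monads. Then the induced functor p* : S-Alg → R-Alg has a left adjoint. -/
/-!
Starting from an `R`-algebra `(X, θ)`, glue in formal `S`-actions one pushout at a time: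
`X¹ = X ⊔_{RX} SX` identifies `θ` with `p_X`, and `Xⁱ⁺² = Xⁱ⁺¹ ⊔_{SSXⁱ} SXⁱ⁺¹` identifies the
two actions `μ ≫ φⁱ` and `Sφⁱ` of `SSXⁱ` on `Xⁱ⁺¹`. Each stage only makes the actions coherent one
level down, but since `S` preserves the colimit `X̄` of the chain `X⁰ → X¹ → ⋯`, the maps
`φⁱ : SXⁱ → Xⁱ⁺¹` assemble into an honest `S`-algebra structure on `X̄`. A map of `R`-algebras
`X → p*B` extends uniquely along every pushout, hence to an `S`-algebra map `X̄ → B`, so `X → p*X̄`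
is a universal arrow.
-/

open CategoryTheory CategoryTheory.Limits

universe v u

namespace CategoryTheory.Monad

variable {C : Type u} [Category.{v} C]

/-- A stage `Xⁱ → Xⁱ⁺¹ ← SXⁱ` of the construction, with `step = xᵢ` and `act = φⁱ`; `hom_ext`
is the part of the pushout property of `Xⁱ⁺¹` that the argument needs. -/
structure ChainStage (S : Monad C) where
  obj : C
  next : C
  step : obj ⟶ next
  act : S.obj obj ⟶ next
  hom_ext {W : C} {f g : next ⟶ W} : step ≫ f = step ≫ g → act ≫ f = act ≫ g → f = g

namespace ChainStage

variable {S : Monad C} (s : ChainStage S)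

def IsUnital : Prop := s.step = S.η.app s.obj ≫ s.act

structure Hom (B : S.Algebra) where
  toObj : s.obj ⟶ B.A
  toNext : s.next ⟶ B.A
  step_comp : s.step ≫ toNext = toObj
  act_comp : s.act ≫ toNext = S.map toObj ≫ B.a

variable [HasPushouts C]

noncomputable abbrev succ : ChainStage S where
  obj := s.next
  next := pushout (S.μ.app s.obj ≫ s.act) (S.map s.act)
  step := pushout.inl _ _
  act := pushout.inr _ _
  hom_ext := pushout.hom_ext

lemma μ_comp_act_comp_succ_step :
    S.μ.app s.obj ≫ s.act ≫ s.succ.step = S.map s.act ≫ s.succ.act := by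
  simpa only [Category.assoc] using
    pushout.condition (f := S.μ.app s.obj ≫ s.act) (g := S.map s.act)

variable {s}

lemma IsUnital.act_comp_succ_step (hs : s.IsUnital) :
    s.act ≫ s.succ.step = S.map s.step ≫ s.succ.act := by
  rw [hs, Functor.map_comp, Category.assoc, ← μ_comp_act_comp_succ_step, right_unit_assoc]

lemma IsUnital.succ (hs : s.IsUnital) : s.succ.IsUnital := by
  unfold IsUnital
  refine s.hom_ext ?_ ?_
  · rw [S.unit_naturality_assoc, ← hs.act_comp_succ_step, ← Category.assoc, ← hs]
  · rw [S.unit_naturality_assoc, ← μ_comp_act_comp_succ_step, left_unit_assoc]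

noncomputable def Hom.succ {B : S.Algebra} (g : s.Hom B) : s.succ.Hom B where
  toObj := g.toNext
  toNext := pushout.desc g.toNext (S.map g.toNext ≫ B.a) (by
    rw [Category.assoc, g.act_comp, ← S.mu_naturality_assoc, B.assoc, ← Functor.map_comp_assoc,
      ← g.act_comp, Functor.map_comp_assoc])
  step_comp := pushout.inl_desc _ _ _
  act_comp := pushout.inr_desc _ _ _

end ChainStage

end CategoryTheory.Monad

namespace CategoryTheory.MonadHom

variable {C : Type u} [Category.{v} C] {R S : Monad C} (p : R ⟶ S) (A : R.Algebra)

section Chain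

variable [HasPushouts C]

noncomputable abbrev chainZero : Monad.ChainStage S where
  obj := A.A
  next := pushout A.a (p.app A.A)
  step := pushout.inl _ _
  act := pushout.inr _ _
  hom_ext := pushout.hom_ext

noncomputable abbrev chain (i : ℕ) : Monad.ChainStage S :=
  Nat.rec (p.chainZero A) (fun _ s => s.succ) i

lemma chainZero_isUnital : (p.chainZero A).IsUnital := by
  change pushout.inl _ _ = S.η.app A.A ≫ pushout.inr A.a (p.app A.A)
  rw [← p.app_η, Category.assoc, ← pushout.condition, A.unit_assoc]

lemma chain_isUnital : ∀ i, (p.chain A i).IsUnital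
  | 0 => p.chainZero_isUnital A
  | i + 1 => (chain_isUnital i).succ

noncomputable abbrev chainObj (i : ℕ) : C := (p.chain A i).obj

noncomputable def chainMap (i : ℕ) : p.chainObj A i ⟶ p.chainObj A (i + 1) := (p.chain A i).step

noncomputable def chainAct (i : ℕ) : S.obj (p.chainObj A i) ⟶ p.chainObj A (i + 1) :=
  (p.chain A i).act

lemma a_comp_chainMap_zero : A.a ≫ p.chainMap A 0 = p.app (p.chainObj A 0) ≫ p.chainAct A 0 :=
  pushout.condition

lemma chainMap_eq_η_comp_chainAct (i : ℕ) :
    p.chainMap A i = S.η.app (p.chainObj A i) ≫ p.chainAct A i :=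
  p.chain_isUnital A i

lemma chainAct_comp_chainMap (i : ℕ) :
    p.chainAct A i ≫ p.chainMap A (i + 1) = S.map (p.chainMap A i) ≫ p.chainAct A (i + 1) :=
  (p.chain_isUnital A i).act_comp_succ_step

lemma μ_comp_chainAct_comp_chainMap (i : ℕ) :
    S.μ.app (p.chainObj A i) ≫ p.chainAct A i ≫ p.chainMap A (i + 1) =
      S.map (p.chainAct A i) ≫ p.chainAct A (i + 1) :=
  (p.chain A i).μ_comp_act_comp_succ_step

lemma chainObj_succ_hom_ext (i : ℕ) {W : C} {f g : p.chainObj A (i + 1) ⟶ W}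
    (h₁ : p.chainMap A i ≫ f = p.chainMap A i ≫ g)
    (h₂ : p.chainAct A i ≫ f = p.chainAct A i ≫ g) : f = g :=
  (p.chain A i).hom_ext h₁ h₂

end Chain

section Colimit

variable [HasPushouts C]

noncomputable def chainDiagram : ℕ ⥤ C := Functor.ofSequence (p.chainMap A)

lemma chainDiagram_map_succ (i : ℕ) :
    (p.chainDiagram A).map (homOfLE (Nat.le_succ i)) = p.chainMap A i :=
  Functor.ofSequence_map_homOfLE_succ _ i

variable [HasColimitsOfShape ℕ C]

noncomputable def chainColimit : C := colimit (p.chainDiagram A)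

noncomputable def chainι (i : ℕ) : p.chainObj A i ⟶ p.chainColimit A :=
  colimit.ι (p.chainDiagram A) i

lemma chainMap_comp_chainι (i : ℕ) : p.chainMap A i ≫ p.chainι A (i + 1) = p.chainι A i := by
  have h := colimit.w (p.chainDiagram A) (homOfLE (Nat.le_succ i))
  rwa [chainDiagram_map_succ] at h

lemma chainColimit_hom_ext {D : Type*} [Category D] (F : C ⥤ D) [PreservesColimitsOfShape ℕ F]
    {W : D} {f g : F.obj (p.chainColimit A) ⟶ W}
    (h : ∀ i, F.map (p.chainι A i) ≫ f = F.map (p.chainι A i) ≫ g) : f = g :=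
  (isColimitOfPreserves F (colimit.isColimit _)).hom_ext h

variable [PreservesColimitsOfShape ℕ S.toFunctor]

noncomputable def actCocone : Cocone (p.chainDiagram A ⋙ S.toFunctor) where
  pt := p.chainColimit A
  ι := NatTrans.ofSequence (fun i => p.chainAct A i ≫ p.chainι A (i + 1)) fun i => by
    simp only [Functor.comp_map, chainDiagram_map_succ, Functor.const_obj_map]
    show S.map (p.chainMap A i) ≫ p.chainAct A (i + 1) ≫ p.chainι A (i + 1 + 1) =
      (p.chainAct A i ≫ p.chainι A (i + 1)) ≫ 𝟙 _
    rw [← reassoc_of% p.chainAct_comp_chainMap A i, chainMap_comp_chainι, Category.comp_id]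

noncomputable def chainColimitAct : S.obj (p.chainColimit A) ⟶ p.chainColimit A :=
  (isColimitOfPreserves S.toFunctor (colimit.isColimit _)).desc (p.actCocone A)

lemma map_chainι_comp_chainColimitAct (i : ℕ) :
    S.map (p.chainι A i) ≫ p.chainColimitAct A = p.chainAct A i ≫ p.chainι A (i + 1) :=
  (isColimitOfPreserves S.toFunctor (colimit.isColimit _)).fac (p.actCocone A) i

noncomputable def leftAdjointObj : S.Algebra where
  A := p.chainColimit A
  a := p.chainColimitAct A
  unit := p.chainColimit_hom_ext A (𝟭 C) fun i => by
    show p.chainι A i ≫ S.η.app (p.chainColimit A) ≫ p.chainColimitAct A = p.chainι A i ≫ 𝟙 _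
    rw [S.unit_naturality_assoc, map_chainι_comp_chainColimitAct,
      ← Category.assoc, ← chainMap_eq_η_comp_chainAct, chainMap_comp_chainι, Category.comp_id]
  assoc := p.chainColimit_hom_ext A (S.toFunctor ⋙ S.toFunctor) fun i => by
    show S.map (S.map (p.chainι A i)) ≫ _ = S.map (S.map (p.chainι A i)) ≫ _
    rw [S.mu_naturality_assoc, map_chainι_comp_chainColimitAct, ← Functor.map_comp_assoc,
      map_chainι_comp_chainColimitAct, Functor.map_comp_assoc, map_chainι_comp_chainColimitAct,
      ← reassoc_of% p.μ_comp_chainAct_comp_chainMap A i, chainMap_comp_chainι]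

end Colimit

section Universal

variable {A} {B : S.Algebra} (f : A ⟶ (Monad.algebraFunctorOfMonadHom p).obj B)

lemma a_comp_hom_f : A.a ≫ f.f = p.app A.A ≫ S.map f.f ≫ B.a :=
  f.h.symm.trans (p.naturality_assoc f.f B.a)

variable [HasPushouts C]

noncomputable def chainZeroHom : (p.chainZero A).Hom B where
  toObj := f.f
  toNext := pushout.desc f.f (S.map f.f ≫ B.a) (p.a_comp_hom_f f)
  step_comp := pushout.inl_desc _ _ _
  act_comp := pushout.inr_desc _ _ _

noncomputable def chainHom (i : ℕ) : (p.chain A i).Hom B :=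
  Nat.rec (p.chainZeroHom f) (fun _ g => g.succ) i

noncomputable def chainLift (i : ℕ) : p.chainObj A i ⟶ B.A := (p.chainHom f i).toObj

lemma chainMap_comp_chainLift (i : ℕ) :
    p.chainMap A i ≫ p.chainLift f (i + 1) = p.chainLift f i :=
  (p.chainHom f i).step_comp

lemma chainAct_comp_chainLift (i : ℕ) :
    p.chainAct A i ≫ p.chainLift f (i + 1) = S.map (p.chainLift f i) ≫ B.a :=
  (p.chainHom f i).act_comp

variable [HasColimitsOfShape ℕ C]

noncomputable def liftCocone : Cocone (p.chainDiagram A) where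
  pt := B.A
  ι := NatTrans.ofSequence (p.chainLift f) fun i => by
    simp only [chainDiagram_map_succ, Functor.const_obj_map]
    show p.chainMap A i ≫ p.chainLift f (i + 1) = p.chainLift f i ≫ 𝟙 _
    rw [chainMap_comp_chainLift, Category.comp_id]

noncomputable def chainColimitLift : p.chainColimit A ⟶ B.A :=
  colimit.desc (p.chainDiagram A) (p.liftCocone f)

lemma chainι_comp_chainColimitLift (i : ℕ) :
    p.chainι A i ≫ p.chainColimitLift f = p.chainLift f i :=
  colimit.ι_desc (p.liftCocone f) i

variable [PreservesColimitsOfShape ℕ S.toFunctor]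

lemma map_chainColimitLift_comp_a :
    S.map (p.chainColimitLift f) ≫ B.a = p.chainColimitAct A ≫ p.chainColimitLift f :=
  p.chainColimit_hom_ext A S.toFunctor fun i => by
    rw [← Functor.map_comp_assoc, chainι_comp_chainColimitLift,
      reassoc_of% p.map_chainι_comp_chainColimitAct A i, chainι_comp_chainColimitLift,
      chainAct_comp_chainLift]

lemma eq_chainColimitLift (g : p.chainColimit A ⟶ B.A)
    (hg : S.map g ≫ B.a = p.chainColimitAct A ≫ g) (h₀ : p.chainι A 0 ≫ g = f.f) :
    g = p.chainColimitLift f := by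
  have hι : ∀ i, p.chainι A i ≫ g = p.chainLift f i := by
    intro i
    induction i with
    | zero => exact h₀
    | succ i ih =>
      refine p.chainObj_succ_hom_ext A i ?_ ?_
      · rw [reassoc_of% p.chainMap_comp_chainι A i, ih, chainMap_comp_chainLift]
      · rw [← reassoc_of% p.map_chainι_comp_chainColimitAct A i, ← hg, ← Functor.map_comp_assoc,
          ih, chainAct_comp_chainLift]
  exact colimit.hom_ext fun i => (hι i).trans (p.chainι_comp_chainColimitLift f i).symm

end Universal

section LeftAdjoint

variable [HasPushouts C] [HasColimitsOfShape ℕ C] [PreservesColimitsOfShape ℕ S.toFunctor]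

noncomputable def leftAdjointUnit :
    A ⟶ (Monad.algebraFunctorOfMonadHom p).obj (p.leftAdjointObj A) where
  f := p.chainι A 0
  h := by
    show R.map (p.chainι A 0) ≫ p.app _ ≫ p.chainColimitAct A = A.a ≫ p.chainι A 0
    rw [p.naturality_assoc, map_chainι_comp_chainColimitAct,
      ← reassoc_of% p.a_comp_chainMap_zero A, chainMap_comp_chainι]

noncomputable def leftAdjointDesc {B : S.Algebra}
    (f : A ⟶ (Monad.algebraFunctorOfMonadHom p).obj B) : p.leftAdjointObj A ⟶ B where
  f := p.chainColimitLift f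
  h := p.map_chainColimitLift_comp_a f

noncomputable def isInitialLeftAdjointUnit :
    IsInitial (StructuredArrow.mk (p.leftAdjointUnit A)) :=
  IsInitial.ofUniqueHom
    (fun Y => StructuredArrow.homMk (p.leftAdjointDesc A Y.hom) <| Monad.Algebra.Hom.ext <|
      p.chainι_comp_chainColimitLift Y.hom 0)
    fun Y m => StructuredArrow.hom_ext _ _ <| Monad.Algebra.Hom.ext <|
      p.eq_chainColimitLift Y.hom m.right.f m.right.h
        (congrArg Monad.Algebra.Hom.f (StructuredArrow.w m))

end LeftAdjoint

end CategoryTheory.MonadHom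

theorem algebraFunctorOfMonadHom_isRightAdjoint
    {C : Type u} [Category.{v} C] [HasColimits C] {R S : Monad C} (p : R ⟶ S)
    [PreservesFilteredColimits S.toFunctor] :
    (Monad.algebraFunctorOfMonadHom p).IsRightAdjoint := by
  have : PreservesColimitsOfShape ℕ S.toFunctor :=
    (preservesSmallestFilteredColimits_of_preservesFilteredColimits
      S.toFunctor).preserves_filtered_colimits ℕ
  have := fun A => (p.isInitialLeftAdjointUnit A).hasInitial
  exact isRightAdjointOfStructuredArrowInitials _
end

section
/- In the sequential pushout construction of the left adjoint to p* (for a monad map p : R ⇒ S with S finitary on a cocomplete category C), each structure map φ^(i) : S X^(i-1) → X^(i) is an epimorphism, for all i ≥ 1. -/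
/-!
STATEMENT 7: In the sequential pushout construction of the left adjoint to `p*`
(for a monad map `p : R ⟶ S` with `S` finitary, on a cocomplete category `C`),
each structure map `φ⁽ⁱ⁾ : S X⁽ⁱ⁻¹⁾ ⟶ X⁽ⁱ⁾` is an epimorphism, for all `i ≥ 1`.

Below, `pushoutChain R S p A i` is the triple `(X⁽ⁱ⁾, X⁽ⁱ⁺¹⁾, (x⁽ⁱ⁺¹⁾, φ⁽ⁱ⁺¹⁾))`:
`X⁽¹⁾` is the pushout of `θ : R X ⟶ X` along `p_X : R X ⟶ S X`, and inductively
`X⁽ⁱ⁺¹⁾` is the pushout of `φ⁽ⁱ⁾ ∘ μ^S : S² X⁽ⁱ⁻¹⁾ ⟶ X⁽ⁱ⁾` along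
`S φ⁽ⁱ⁾ : S² X⁽ⁱ⁻¹⁾ ⟶ S X⁽ⁱ⁾`, with `φ⁽ⁱ⁺¹⁾ := pushout.inr` and `x⁽ⁱ⁺¹⁾ := pushout.inl`.
-/

open CategoryTheory CategoryTheory.Limits

universe v u

variable {C : Type u} [Category.{v} C]

/-- The sequence of pushouts used to construct the left adjoint to `p*`:
`pushoutChain R S p A i = (X⁽ⁱ⁾, X⁽ⁱ⁺¹⁾, (x⁽ⁱ⁺¹⁾ : X⁽ⁱ⁾ ⟶ X⁽ⁱ⁺¹⁾, φ⁽ⁱ⁺¹⁾ : S X⁽ⁱ⁾ ⟶ X⁽ⁱ⁺¹⁾))`. -/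
noncomputable def pushoutChain [HasColimits C] (R S : Monad C) (p : R ⟶ S)
    (A : Monad.Algebra R) :
    ℕ → Σ (Xp Xc : C), (Xp ⟶ Xc) × (S.obj Xp ⟶ Xc) := fun n =>
  Nat.rec (motive := fun _ => Σ (Xp Xc : C), (Xp ⟶ Xc) × (S.obj Xp ⟶ Xc))
    ⟨A.A, pushout A.a (p.app A.A), pushout.inl _ _, pushout.inr _ _⟩
    (fun _ prev =>
      ⟨prev.2.1, pushout (S.μ.app prev.1 ≫ prev.2.2.2) (S.map prev.2.2.2),
        pushout.inl _ _, pushout.inr _ _⟩) n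

/-- Every structure map `φ⁽ⁱ⁾` (`i ≥ 1`) in the sequential pushout construction is an
epimorphism. -/
theorem pushoutChain_structureMap_epi [HasColimits C] (R S : Monad C) (p : R ⟶ S)
    (A : Monad.Algebra R) (i : ℕ) :
    Epi (pushoutChain R S p A i).2.2.2 := by
  induction i with
  | zero =>
    show Epi (pushout.inr A.a (p.app A.A))
    have : IsSplitEpi A.a := ⟨⟨⟨R.η.app A.A, A.unit⟩⟩⟩
    infer_instance
  | succ n ih =>
    show Epi (pushout.inr (S.μ.app (pushoutChain R S p A n).1 ≫ (pushoutChain R S p A n).2.2.2)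
      (S.map (pushoutChain R S p A n).2.2.2))
    have : IsSplitEpi (S.μ.app (pushoutChain R S p A n).1) :=
      ⟨⟨⟨S.η.app _, by simp⟩⟩⟩
    have : Epi (S.μ.app (pushoutChain R S p A n).1 ≫ (pushoutChain R S p A n).2.2.2) :=
      epi_comp _ _
    infer_instance
end

section
/- The object X̄ = colim_{i≥0} X^(i) constructed as the sequential colimit of the pushout sequence associated to an R-algebra (X, θ) and a monad map p : R ⇒ S (with S finitary), equipped with the map φ : S X̄ → X̄ induced by the cocone of maps φ^(i+1) ∘ S c^(i), satisfies the unit and associativity axioms for an S-algebra. -/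
/-!
STATEMENT 8: The object `X̄ = colim_{i ≥ 0} X⁽ⁱ⁾`, constructed as the sequential
colimit of the pushout sequence associated to an `R`-algebra `(X, θ)` and a monad
map `p : R ⟶ S` (with `S` finitary), equipped with the map `φ : S X̄ ⟶ X̄` induced
by the cocone of maps `φ⁽ⁱ⁺¹⁾ ∘ S c⁽ⁱ⁾`, satisfies the unit and associativity axioms
for an `S`-algebra: `φ ∘ η^S_{X̄} = id` and `φ ∘ μ^S_{X̄} = φ ∘ S φ`.
-/

open CategoryTheory CategoryTheory.Limits

universe v u

variable {C : Type u} [Category.{v} C]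

/-- The functor `ℕ ⥤ C` given by the objects `X⁽ⁱ⁾` and the connecting maps
`x⁽ⁱ⁺¹⁾ : X⁽ⁱ⁾ ⟶ X⁽ⁱ⁺¹⁾` of the pushout sequence. -/
noncomputable def pushoutChainFunctor [HasColimits C] (R S : Monad C) (p : R ⟶ S)
    (A : Monad.Algebra R) : ℕ ⥤ C :=
  Functor.ofSequence (X := fun i => (pushoutChain R S p A i).1)
    (fun i => (pushoutChain R S p A i).2.2.1)


/-! The unit law is checked on the coprojections `c⁽ⁱ⁾`, associativity on their images
`S S c⁽ⁱ⁾`, which stay jointly epimorphic because `S` preserves the sequential colimit. There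
they reduce to the level-wise identities `η ≫ φ⁽ⁱ⁺¹⁾ = x⁽ⁱ⁺¹⁾` and
`μ ≫ φ⁽ⁱ⁺¹⁾ ≫ x⁽ⁱ⁺²⁾ = S φ⁽ⁱ⁺¹⁾ ≫ φ⁽ⁱ⁺²⁾`. The second is the commuting square of the pushout
`X⁽ⁱ⁺²⁾`; the first holds at `i = 0` by the unit law of the `R`-algebra and `η^S = η^R ≫ p`, and
passes from `i` to `i + 1` by the unit laws of `S`, checked on the two legs of the pushout
`X⁽ⁱ⁺¹⁾`. -/

namespace CategoryTheory.Monad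

variable (S : Monad C)

theorem η_comp_pushout_inr {X Y : C} {x : X ⟶ Y} {f : S.obj X ⟶ Y}
    (hf : S.η.app X ≫ f = x)
    (hext : ∀ {Z : C} {g h : Y ⟶ Z}, x ≫ g = x ≫ h → f ≫ g = f ≫ h → g = h)
    [HasPushout (S.μ.app X ≫ f) (S.map f)] :
    S.η.app Y ≫ pushout.inr (S.μ.app X ≫ f) (S.map f) = pushout.inl _ _ := by
  have hcond := pushout.condition (f := S.μ.app X ≫ f) (g := S.map f)
  apply hext
  · calc x ≫ S.η.app Y ≫ pushout.inr _ _
          = S.η.app X ≫ S.map (S.η.app X) ≫ S.map f ≫ pushout.inr _ _ := by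
            rw [← Functor.map_comp_assoc, hf]; exact S.η.naturality_assoc x _
        _ = S.η.app X ≫ (S.map (S.η.app X) ≫ S.μ.app X) ≫ f ≫ pushout.inl _ _ := by
            rw [← hcond]; simp only [Category.assoc]
        _ = x ≫ pushout.inl _ _ := by
            simp only [S.right_unit, Functor.id_obj, Category.id_comp, reassoc_of% hf]
  · calc f ≫ S.η.app Y ≫ pushout.inr _ _
          = S.η.app (S.obj X) ≫ S.map f ≫ pushout.inr _ _ := S.η.naturality_assoc f _
        _ = (S.η.app (S.obj X) ≫ S.μ.app X) ≫ f ≫ pushout.inl _ _ := by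
            rw [← hcond]; simp only [Category.assoc]
        _ = f ≫ pushout.inl _ _ := by rw [S.left_unit, Category.id_comp]

section Sequence

variable {F : ℕ ⥤ C} [HasColimit F] {φ : ∀ i, S.obj (F.obj i) ⟶ F.obj (i + 1)}
  {a : S.obj (colimit F) ⟶ colimit F}

theorem colimit_η_comp_of_sequence
    (ha : ∀ i, S.map (colimit.ι F i) ≫ a = φ i ≫ colimit.ι F (i + 1))
    (hη : ∀ i, S.η.app (F.obj i) ≫ φ i = F.map (homOfLE (Nat.le_add_right i 1))) :
    S.η.app (colimit F) ≫ a = 𝟙 _ := by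
  refine colimit.hom_ext fun i => ?_
  calc colimit.ι F i ≫ S.η.app _ ≫ a = S.η.app (F.obj i) ≫ S.map (colimit.ι F i) ≫ a :=
        S.η.naturality_assoc _ _
    _ = colimit.ι F i ≫ 𝟙 _ := by rw [ha, reassoc_of% hη, colimit.w, Category.comp_id]

theorem colimit_μ_comp_of_sequence [PreservesColimit F S.toFunctor]
    [PreservesColimit (F ⋙ S.toFunctor) S.toFunctor]
    (ha : ∀ i, S.map (colimit.ι F i) ≫ a = φ i ≫ colimit.ι F (i + 1))
    (hμ : ∀ i, S.μ.app (F.obj i) ≫ φ i ≫ F.map (homOfLE (Nat.le_add_right (i + 1) 1)) =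
      S.map (φ i) ≫ φ (i + 1)) :
    S.μ.app (colimit F) ≫ a = S.map a ≫ a := by
  have hSS : IsColimit (S.mapCocone (S.mapCocone (colimit.cocone F))) :=
    isColimitOfPreserves S.toFunctor (isColimitOfPreserves S.toFunctor (colimit.isColimit F))
  refine hSS.hom_ext fun i => ?_
  change S.map (S.map (colimit.ι F i)) ≫ _ = S.map (S.map (colimit.ι F i)) ≫ _
  calc S.map (S.map (colimit.ι F i)) ≫ S.μ.app (colimit F) ≫ a
        = S.μ.app (F.obj i) ≫ φ i ≫ colimit.ι F (i + 1) := by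
          rw [← ha]; exact S.μ.naturality_assoc _ _
    _ = S.map (φ i) ≫ φ (i + 1) ≫ colimit.ι F (i + 2) := by
          rw [← colimit.w F (homOfLE (Nat.le_add_right (i + 1) 1)), reassoc_of% hμ]
    _ = S.map (S.map (colimit.ι F i)) ≫ S.map a ≫ a := by
          rw [← Functor.map_comp_assoc, ha, Functor.map_comp_assoc, ha]

end Sequence

end CategoryTheory.Monad

section PushoutChain

variable [HasColimits C] (R S : Monad C) (p : R ⟶ S) (A : Monad.Algebra R)

theorem pushoutChain_hom_ext (i : ℕ) {Y : C} {f g : (pushoutChain R S p A i).2.1 ⟶ Y}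
    (h₁ : (pushoutChain R S p A i).2.2.1 ≫ f = (pushoutChain R S p A i).2.2.1 ≫ g)
    (h₂ : (pushoutChain R S p A i).2.2.2 ≫ f = (pushoutChain R S p A i).2.2.2 ≫ g) :
    f = g := by
  cases i <;> exact pushout.hom_ext h₁ h₂

theorem pushoutChain_η_comp : ∀ i : ℕ,
    S.η.app (pushoutChain R S p A i).1 ≫ (pushoutChain R S p A i).2.2.2 =
      (pushoutChain R S p A i).2.2.1
  | 0 => show S.η.app A.A ≫ pushout.inr A.a (p.app A.A) = pushout.inl _ _ by
      rw [← p.app_η, Category.assoc, ← pushout.condition, reassoc_of% A.unit]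
  | i + 1 => S.η_comp_pushout_inr (pushoutChain_η_comp i) (pushoutChain_hom_ext R S p A i)

theorem pushoutChain_μ_comp (i : ℕ) :
    S.μ.app (pushoutChain R S p A i).1 ≫ (pushoutChain R S p A i).2.2.2 ≫
        (pushoutChain R S p A (i + 1)).2.2.1 =
      S.map (pushoutChain R S p A i).2.2.2 ≫ (pushoutChain R S p A (i + 1)).2.2.2 :=
  (Category.assoc _ _ _).symm.trans pushout.condition

theorem pushoutChainFunctor_map_succ (i : ℕ) :
    (pushoutChainFunctor R S p A).map (homOfLE (Nat.le_add_right i 1)) =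
      (pushoutChain R S p A i).2.2.1 :=
  Functor.ofSequence_map_homOfLE_succ _ i

end PushoutChain

/-- Any map `φ : S X̄ ⟶ X̄` compatible with the cocone maps (i.e. satisfying
`φ ∘ S c⁽ⁱ⁾ = c⁽ⁱ⁺¹⁾ ∘ φ⁽ⁱ⁺¹⁾`, the property characterising the induced map)
satisfies the unit and associativity axioms for an `S`-algebra structure on `X̄`. -/
theorem pushoutChain_colimit_algebra [HasColimits C] (R S : Monad C) (p : R ⟶ S)
    (A : Monad.Algebra R) [PreservesFilteredColimits S.toFunctor]
    (φ : S.obj (colimit (pushoutChainFunctor R S p A)) ⟶ colimit (pushoutChainFunctor R S p A))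
    (hφ : ∀ i : ℕ, S.map (colimit.ι (pushoutChainFunctor R S p A) i) ≫ φ =
      (pushoutChain R S p A i).2.2.2 ≫ colimit.ι (pushoutChainFunctor R S p A) (i + 1)) :
    S.η.app (colimit (pushoutChainFunctor R S p A)) ≫ φ = 𝟙 _ ∧
      S.μ.app (colimit (pushoutChainFunctor R S p A)) ≫ φ = S.map φ ≫ φ := by
  have := preservesSmallestFilteredColimits_of_preservesFilteredColimits S.toFunctor
  refine ⟨S.colimit_η_comp_of_sequence hφ fun i => ?_,
    S.colimit_μ_comp_of_sequence hφ fun i => ?_⟩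
  · rw [pushoutChainFunctor_map_succ]
    exact pushoutChain_η_comp R S p A i
  · rw [pushoutChainFunctor_map_succ]
    exact pushoutChain_μ_comp R S p A i
end

section
/- A simplicial set A : Δᵒᵖ → Set is isomorphic to the nerve of a small category if and only if for every k ≥ 2 the Segal map S_k : A_k → A_1 ×_{A_0} ⋯ ×_{A_0} A_1 (the k-fold wide pullback of A_1 over A_0 along source and target) is an isomorphism; moreover, the nerve of any small category satisfies this condition. -/
/-!
The nerve of a category is strict Segal, and a morphism of simplicial sets commutes with the
spine maps, so the strict Segal condition passes along isomorphisms. The Segal maps in degrees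
`0` and `1` are always bijective, so conversely the hypothesis makes `A` strict Segal. The
vertices and edges of a strict Segal simplicial set form a category: the composite of two
composable edges is the long edge of the unique `2`-simplex they span, and associativity is
read off the unique `3`-simplex spanned by three composable edges. Sending a simplex to the
diagram of all its edges `i ⟶ j` is a map to the nerve of this category that is bijective on
vertices and on edges; as source and target are strict Segal, it is bijective in every degree.
-/

open CategoryTheory Simplicial SimplexCategory Opposite

universe u

namespace SimplexCategory

variable {n : ℕ} {i j k : Fin (n + 1)}

lemma δ_one_comp_mkOfLe (hij : i ≤ j) : δ 1 ≫ mkOfLe i j hij = ⦋0⦌.const ⦋n⦌ i :=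
  Hom.ext_zero_left _ _

lemma δ_zero_comp_mkOfLe (hij : i ≤ j) : δ 0 ≫ mkOfLe i j hij = ⦋0⦌.const ⦋n⦌ j :=
  Hom.ext_zero_left _ _

lemma δ_two_comp_mkOfLeComp (hij : i ≤ j) (hjk : j ≤ k) :
    δ 2 ≫ mkOfLeComp i j k hij hjk = mkOfLe i j hij :=
  Hom.ext_one_left _ _

lemma δ_zero_comp_mkOfLeComp (hij : i ≤ j) (hjk : j ≤ k) :
    δ 0 ≫ mkOfLeComp i j k hij hjk = mkOfLe j k hjk :=
  Hom.ext_one_left _ _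

lemma δ_one_comp_mkOfLeComp (hij : i ≤ j) (hjk : j ≤ k) :
    δ 1 ≫ mkOfLeComp i j k hij hjk = mkOfLe i k (hij.trans hjk) :=
  Hom.ext_one_left _ _

lemma mkOfSucc_eq_mkOfLe (i : Fin n) :
    mkOfSucc i = mkOfLe i.castSucc i.succ (Fin.castSucc_le_succ i) :=
  Hom.ext_one_left _ _

lemma mkOfLe_comp {m : ℕ} (hij : i ≤ j) (ψ : ⦋n⦌ ⟶ ⦋m⦌) :
    mkOfLe i j hij ≫ ψ =
      mkOfLe (ψ.toOrderHom i) (ψ.toOrderHom j) (ψ.toOrderHom.monotone hij) :=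
  Hom.ext_one_left _ _

lemma mkOfLe_zero_one : mkOfLe (0 : Fin 2) 1 zero_le_one = 𝟙 ⦋1⦌ :=
  Hom.ext_one_left _ _

end SimplexCategory

namespace SSet

variable {X Y : SSet.{u}}

lemma spine_comp_app (f : X ⟶ Y) (n : ℕ) :
    Y.spine n ∘ f.app (op ⦋n⦌) = (Path.map · f) ∘ X.spine n := by
  funext Δ
  ext i <;> exact (f.naturality_apply _ Δ).symm

lemma Path.map_bijective (f : X ⟶ Y) (h₀ : Function.Bijective (f.app (op ⦋0⦌)))
    (h₁ : Function.Bijective (f.app (op ⦋1⦌))) (n : ℕ) :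
    Function.Bijective (Path.map · f : Path X n → Path Y n) := by
  refine ⟨fun p q hpq ↦ Path.ext ?_ ?_, fun q ↦ ?_⟩
  · funext i
    exact h₀.injective (Path.congr_vertex hpq i)
  · funext i
    exact h₁.injective (Path.congr_arrow hpq i)
  · choose v hv using h₀.surjective
    choose a ha using h₁.surjective
    refine ⟨⟨fun i ↦ v (q.vertex i), fun i ↦ a (q.arrow i), fun i ↦ h₀.injective ?_,
      fun i ↦ h₀.injective ?_⟩, Path.ext (funext fun i ↦ hv _) (funext fun i ↦ ha _)⟩
    · refine ((f.naturality_apply _ _).trans ?_).trans (hv _).symm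
      exact (congrArg _ (ha _)).trans (q.arrow_src i)
    · refine ((f.naturality_apply _ _).trans ?_).trans (hv _).symm
      exact (congrArg _ (ha _)).trans (q.arrow_tgt i)

lemma spine_zero_bijective : Function.Bijective (X.spine 0) := by
  refine ⟨fun Δ Δ' h ↦ ?_, fun p ↦ ⟨p.vertex 0, Path.ext₀ ?_⟩⟩
  · simpa [spine_vertex, const_eq_id] using Path.congr_vertex h 0
  · simp [spine_vertex, const_eq_id]

lemma spine_one_bijective : Function.Bijective (X.spine 1) := by
  refine ⟨fun Δ Δ' h ↦ ?_, fun p ↦ ⟨p.arrow 0, Path.ext' fun i ↦ ?_⟩⟩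
  · simpa [spine_arrow] using Path.congr_arrow h 0
  · fin_cases i
    simp [spine_arrow]

lemma isStrictSegal_of_spine_bijective_of_two_le
    (h : ∀ k, 2 ≤ k → Function.Bijective (X.spine k)) : IsStrictSegal X where
  segal
    | 0 => spine_zero_bijective
    | 1 => spine_one_bijective
    | k + 2 => h (k + 2) (by omega)

lemma IsStrictSegal.of_iso (e : X ≅ Y) [IsStrictSegal Y] : IsStrictSegal X where
  segal n := by
    have h₀ := (isIso_iff_bijective (e.hom.app (op ⦋0⦌))).1 inferInstance
    have h₁ := (isIso_iff_bijective (e.hom.app (op ⦋1⦌))).1 inferInstance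
    rw [← (Path.map_bijective e.hom h₀ h₁ n).of_comp_iff', ← spine_comp_app]
    exact (IsStrictSegal.segal n).comp ((isIso_iff_bijective _).1 inferInstance)

lemma isIso_of_bijective_app_zero_one [IsStrictSegal X] [IsStrictSegal Y] (f : X ⟶ Y)
    (h₀ : Function.Bijective (f.app (op ⦋0⦌)))
    (h₁ : Function.Bijective (f.app (op ⦋1⦌))) : IsIso f := by
  have (m : SimplexCategoryᵒᵖ) : IsIso (f.app m) := by
    obtain ⟨⟨n⟩⟩ := m
    rw [isIso_iff_bijective, ← (IsStrictSegal.segal n).of_comp_iff', spine_comp_app]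
    exact (Path.map_bijective f h₀ h₁ n).comp (IsStrictSegal.segal n)
  exact NatIso.isIso_of_isIso_app f

section Edges

variable {m n : ℕ}

lemma δ_map_op (φ : ⦋m + 1⦌ ⟶ ⦋n⦌) (k : Fin (m + 2)) (Δ : X _⦋n⦌) :
    X.δ k (X.map φ.op Δ) = X.map (δ k ≫ φ).op Δ := by
  rw [SimplicialObject.δ, ← Functor.map_comp_apply, ← op_comp]

lemma δ_one_map_mkOfLe (Δ : X _⦋n⦌) {i j : Fin (n + 1)} (hij : i ≤ j) :
    X.δ 1 (X.map (mkOfLe i j hij).op Δ) = X.map (⦋0⦌.const ⦋n⦌ i).op Δ := by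
  rw [δ_map_op, δ_one_comp_mkOfLe]

lemma δ_zero_map_mkOfLe (Δ : X _⦋n⦌) {i j : Fin (n + 1)} (hij : i ≤ j) :
    X.δ 0 (X.map (mkOfLe i j hij).op Δ) = X.map (⦋0⦌.const ⦋n⦌ j).op Δ := by
  rw [δ_map_op, δ_zero_comp_mkOfLe]

def Edge.ofSimplex (Δ : X _⦋n⦌) (i j : Fin (n + 1)) (hij : i ≤ j) :
    Edge (X.map (⦋0⦌.const ⦋n⦌ i).op Δ) (X.map (⦋0⦌.const ⦋n⦌ j).op Δ) :=
  Edge.mk (X.map (mkOfLe i j hij).op Δ) (δ_one_map_mkOfLe Δ hij) (δ_zero_map_mkOfLe Δ hij)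

lemma Edge.ofSimplex_self (Δ : X _⦋n⦌) (i : Fin (n + 1)) :
    Edge.ofSimplex Δ i i le_rfl = Edge.id _ := by
  ext
  rw [Edge.id_edge, SimplicialObject.σ, ← Functor.map_comp_apply, ← op_comp]
  exact congrArg (X.map · Δ) (congrArg op (mkOfLe_refl i))

def Edge.CompStruct.ofSimplex (Δ : X _⦋n⦌) {i j k : Fin (n + 1)} (hij : i ≤ j)
    (hjk : j ≤ k) :
    CompStruct (Edge.ofSimplex Δ i j hij) (Edge.ofSimplex Δ j k hjk)
      (Edge.ofSimplex Δ i k (hij.trans hjk)) :=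
  CompStruct.mk (X.map (mkOfLeComp i j k hij hjk).op Δ)
    (by rw [δ_map_op, δ_two_comp_mkOfLeComp]; rfl)
    (by rw [δ_map_op, δ_zero_comp_mkOfLeComp]; rfl)
    (by rw [δ_map_op, δ_one_comp_mkOfLeComp]; rfl)

end Edges

lemma spine_two_arrow_zero (s : X _⦋2⦌) : (X.spine 2 s).arrow 0 = X.δ 2 s := by
  rw [spine_arrow, mkOfSucc_zero_eq_δ]
  rfl

lemma spine_two_arrow_one (s : X _⦋2⦌) : (X.spine 2 s).arrow 1 = X.δ 0 s := by
  rw [spine_arrow, mkOfSucc_one_eq_δ]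
  rfl

section StrictSegal

variable [IsStrictSegal X] {x₀ x₁ x₂ : X _⦋0⦌}

lemma IsStrictSegal.ext₂ {s t : X _⦋2⦌} (h₂ : X.δ 2 s = X.δ 2 t)
    (h₀ : X.δ 0 s = X.δ 0 t) : s = t :=
  (IsStrictSegal.segal 2).injective <| Path.ext' fun i ↦ by
    match i with
    | 0 => rw [spine_two_arrow_zero, spine_two_arrow_zero, h₂]
    | 1 => rw [spine_two_arrow_one, spine_two_arrow_one, h₀]

lemma Edge.CompStruct.unique {f : Edge x₀ x₁} {g : Edge x₁ x₂} {h h' : Edge x₀ x₂}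
    (c : CompStruct f g h) (c' : CompStruct f g h') : h = h' := by
  ext
  rw [← c.d₁, ← c'.d₁,
    IsStrictSegal.ext₂ (c.d₂.trans c'.d₂.symm) (c.d₀.trans c'.d₀.symm)]

lemma Edge.exists_compStruct (f : Edge x₀ x₁) (g : Edge x₁ x₂) :
    ∃ h : Edge x₀ x₂, Nonempty (CompStruct f g h) := by
  obtain ⟨s, hs⟩ := (IsStrictSegal.segal 2).surjective
    { vertex := ![x₀, x₁, x₂]
      arrow := ![f.edge, g.edge]
      arrow_src i := by fin_cases i; exacts [f.src_eq, g.src_eq]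
      arrow_tgt i := by fin_cases i; exacts [f.tgt_eq, g.tgt_eq] }
  have h₂ : X.δ 2 s = f.edge := (spine_two_arrow_zero s).symm.trans (Path.congr_arrow hs 0)
  have h₀ : X.δ 0 s = g.edge := (spine_two_arrow_one s).symm.trans (Path.congr_arrow hs 1)
  refine ⟨Edge.mk (X.δ 1 s) ?_ ?_, ⟨CompStruct.mk s h₂ h₀ rfl⟩⟩
  · calc X.δ 1 (X.δ 1 s) = X.δ 1 (X.δ 2 s) := δ_comp_δ_self_apply (i := 1) s
      _ = x₀ := by rw [h₂, f.src_eq]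
  · calc X.δ 0 (X.δ 1 s) = X.δ 0 (X.δ 0 s) := (δ_comp_δ_self_apply (i := 0) s).symm
      _ = x₂ := by rw [h₀, g.tgt_eq]

end StrictSegal

variable (X) in
def EdgeCat : Type u := X _⦋0⦌

namespace EdgeCat

variable [IsStrictSegal X] {n : ℕ}

noncomputable instance : CategoryStruct (EdgeCat X) where
  Hom x y := Edge (X := X) x y
  id x := Edge.id (X := X) x
  comp f g := (Edge.exists_compStruct f g).choose

lemma comp_eq_of_compStruct {x₀ x₁ x₂ : EdgeCat X} {f : x₀ ⟶ x₁} {g : x₁ ⟶ x₂}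
    {h : x₀ ⟶ x₂} (c : Edge.CompStruct f g h) : f ≫ g = h :=
  (Edge.exists_compStruct f g).choose_spec.some.unique c

lemma ofSimplex_comp (Δ : X _⦋n⦌) {i j k : Fin (n + 1)} (hij : i ≤ j) (hjk : j ≤ k) :
    (Edge.ofSimplex Δ i j hij ≫ Edge.ofSimplex Δ j k hjk : (_ : EdgeCat X) ⟶ _) =
      Edge.ofSimplex Δ i k (hij.trans hjk) :=
  comp_eq_of_compStruct (.ofSimplex Δ hij hjk)

noncomputable instance : Category (EdgeCat X) where
  id_comp f := comp_eq_of_compStruct (.idComp f)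
  comp_id f := comp_eq_of_compStruct (.compId f)
  assoc {x₀ x₁ x₂ x₃} f g h := by
    obtain ⟨T, hT⟩ := (IsStrictSegal.segal 3).surjective
      { vertex := ![x₀, x₁, x₂, x₃]
        arrow := ![f.edge, g.edge, h.edge]
        arrow_src i := by fin_cases i; exacts [f.src_eq, g.src_eq, h.src_eq]
        arrow_tgt i := by fin_cases i; exacts [f.tgt_eq, g.tgt_eq, h.tgt_eq] }
    obtain rfl : X.map (⦋0⦌.const ⦋3⦌ 0).op T = x₀ := Path.congr_vertex hT 0
    obtain rfl : X.map (⦋0⦌.const ⦋3⦌ 1).op T = x₁ := Path.congr_vertex hT 1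
    obtain rfl : X.map (⦋0⦌.const ⦋3⦌ 2).op T = x₂ := Path.congr_vertex hT 2
    obtain rfl : X.map (⦋0⦌.const ⦋3⦌ 3).op T = x₃ := Path.congr_vertex hT 3
    have arrow_eq (i : Fin 3) : (X.spine 3 T).arrow i =
        (Edge.ofSimplex T i.castSucc i.succ (Fin.castSucc_le_succ i)).edge := by
      rw [spine_arrow, mkOfSucc_eq_mkOfLe]
      rfl
    obtain rfl : f = Edge.ofSimplex T 0 1 (by decide) :=
      Edge.ext ((Path.congr_arrow hT 0).symm.trans (arrow_eq 0))
    obtain rfl : g = Edge.ofSimplex T 1 2 (by decide) :=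
      Edge.ext ((Path.congr_arrow hT 1).symm.trans (arrow_eq 1))
    obtain rfl : h = Edge.ofSimplex T 2 3 (by decide) :=
      Edge.ext ((Path.congr_arrow hT 2).symm.trans (arrow_eq 2))
    simp only [ofSimplex_comp]

lemma edge_eqToHom_comp_comp_eqToHom {x y x' y' : EdgeCat X} (hx : x = x') (hy : y' = y)
    (f : x' ⟶ y') : Edge.edge (eqToHom hx ≫ f ≫ eqToHom hy) = Edge.edge f := by
  subst hx hy
  simp

def ofSimplex (Δ : X _⦋n⦌) : ComposableArrows (EdgeCat X) n where
  obj i := X.map (⦋0⦌.const ⦋n⦌ i).op Δ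
  map φ := Edge.ofSimplex Δ _ _ (leOfHom φ)
  map_id i := Edge.ofSimplex_self Δ i
  map_comp φ ψ := (ofSimplex_comp Δ (leOfHom φ) (leOfHom ψ)).symm

lemma ofSimplex_map {m : ℕ} (ψ : ⦋m⦌ ⟶ ⦋n⦌) (Δ : X _⦋n⦌) :
    ofSimplex (X.map ψ.op Δ) =
      (ofSimplex Δ).whiskerLeft (SimplexCategory.toCat.map ψ).toFunctor := by
  refine CategoryTheory.Functor.ext (fun i ↦ ?_) (fun i j hij ↦ Edge.ext ?_)
  · change X.map _ (X.map _ Δ) = X.map _ Δ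
    rw [← Functor.map_comp_apply, ← op_comp]
    rfl
  · rw [edge_eqToHom_comp_comp_eqToHom]
    change X.map _ (X.map _ Δ) = X.map _ Δ
    rw [← Functor.map_comp_apply, ← op_comp, mkOfLe_comp]
    rfl

variable (X) in
noncomputable def toNerve : X ⟶ nerve (EdgeCat X) where
  app m := ↾(ofSimplex (n := m.unop.len))
  naturality m m' φ := by
    ext Δ
    exact ofSimplex_map φ.unop Δ

lemma toNerve_app_zero_bijective : Function.Bijective ((toNerve X).app (op ⦋0⦌)) := by
  have nerveEquiv_toNerve_app (Δ : X _⦋0⦌) :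
      nerveEquiv ((toNerve X).app (op ⦋0⦌) Δ) = Δ := by
    change X.map (⦋0⦌.const ⦋0⦌ 0).op Δ = Δ
    rw [const_eq_id, op_id, Functor.map_id_apply]
  exact Function.bijective_iff_has_inverse.2 ⟨nerveEquiv, nerveEquiv_toNerve_app,
    fun F ↦ nerveEquiv.injective (nerveEquiv_toNerve_app _)⟩

lemma toNerve_app_one_bijective : Function.Bijective ((toNerve X).app (op ⦋1⦌)) := by
  refine Function.bijective_iff_has_inverse.2
    ⟨fun F : ComposableArrows (EdgeCat X) 1 ↦ F.hom.edge, fun Δ ↦ ?_, fun F ↦ ?_⟩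
  · change X.map (mkOfLe 0 1 zero_le_one).op Δ = Δ
    rw [mkOfLe_zero_one, op_id, Functor.map_id_apply]
  · refine ComposableArrows.ext₁ ?_ ?_ (Edge.ext ?_)
    · change X.map (⦋0⦌.const ⦋1⦌ 0).op F.hom.edge = F.left
      rw [← δ_one_eq_const]
      exact F.hom.src_eq
    · change X.map (⦋0⦌.const ⦋1⦌ 1).op F.hom.edge = F.right
      rw [← δ_zero_eq_const]
      exact F.hom.tgt_eq
    · refine Eq.trans ?_ (edge_eqToHom_comp_comp_eqToHom _ _ _).symm
      change X.map (mkOfLe 0 1 zero_le_one).op _ = _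
      rw [mkOfLe_zero_one, op_id, Functor.map_id_apply]

instance : IsIso (toNerve X) :=
  isIso_of_bijective_app_zero_one _ toNerve_app_zero_bijective toNerve_app_one_bijective

end EdgeCat

end SSet

open SSet in
theorem nerve_characterisation_by_segal_maps (A : SSet.{u}) :
    ((∀ k : ℕ, 2 ≤ k → Function.Bijective (A.spine k)) ↔
      ∃ (C : Type u) (_ : SmallCategory C), Nonempty (A ≅ nerve C)) ∧
    ∀ (C : Type u) (inst : SmallCategory C) (k : ℕ), 2 ≤ k →
      Function.Bijective ((@nerve C inst).spine k) := by
  refine ⟨⟨fun h ↦ ?_, fun ⟨C, _, ⟨e⟩⟩ k _ ↦ ?_⟩,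
    fun C _ k _ ↦ IsStrictSegal.segal k⟩
  · have := isStrictSegal_of_spine_bijective_of_two_le h
    exact ⟨EdgeCat A, inferInstance, ⟨asIso (EdgeCat.toNerve A)⟩⟩
  · have := IsStrictSegal.of_iso e
    exact IsStrictSegal.segal k
end

section
/- Let A : Δᵒᵖ → Set be a simplicial set satisfying the Segal condition (all Segal maps S_k : A_k → A_1 ×_{A_0} ⋯ ×_{A_0} A_1 are bijections for k ≥ 0). Then the data (A_0, A_1, s, t) together with the composition A_1 ×_{A_0} A_1 ≅ A_2 → A_1 (via the inverse of S_2 followed by the face map A(d_1)) and identities given by the degeneracy A_0 → A_1 forms a category: composition is associative and unital. -/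
/-!
STATEMENT 17: Let `A : Δᵒᵖ ⥤ Set` be a simplicial set satisfying the Segal condition
(all Segal maps `S_k : A_k ⟶ A_1 ×_{A_0} ⋯ ×_{A_0} A_1` — realised as the spine maps
`A.spine k` — are bijections).  Then the data `(A_0, A_1, s, t)`, together with the
composition `A_1 ×_{A_0} A_1 ≅ A_2 ⟶ A_1` (given by the inverse of `S_2` followed by
the face map `A(d_1)`) and identities given by the degeneracy `A_0 → A_1`, forms a
category: composition has the expected sources and targets and is associative and
unital.
-/

open CategoryTheory Simplicial

universe u

namespace SegalStmt

variable (A : SSet.{u})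

/-- The source of a `1`-simplex: the face `d₁`. -/
def src : A _⦋1⦌ → A _⦋0⦌ := A.map (SimplexCategory.δ (1 : Fin 2)).op

/-- The target of a `1`-simplex: the face `d₀`. -/
def tgt : A _⦋1⦌ → A _⦋0⦌ := A.map (SimplexCategory.δ (0 : Fin 2)).op

/-- The identity on a `0`-simplex: the degeneracy `s₀`. -/
def ide : A _⦋0⦌ → A _⦋1⦌ := A.map (SimplexCategory.σ (0 : Fin 1)).op

/-!
Since the spine map is bijective in degree 2, a composable pair `(f, g)` spans a unique
2-simplex, and `g ∘ f` is its face `d₁`. The degeneracies `s₀ f` and `s₁ f` are the 2-simplices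
with spines `(id, f)` and `(f, id)`, and their `d₁`-face is `f`: these are the unit laws.
For a composable triple `(f, g, k)` take the 3-simplex `τ` with that spine; its faces `d₁ τ`
and `d₂ τ` have spines `(g ∘ f, k)` and `(f, k ∘ g)`, so associativity is the simplicial
identity `d₁ d₁ = d₁ d₂`.
-/

open SimplexCategory SSet

lemma diag_two_eq_δ_one : diag 2 = δ 1 := by decide

section Composition

variable {A}

def path₂ (f g : A _⦋1⦌) (h : tgt A f = src A g) : Path A 2 where
  vertex := ![src A f, src A g, tgt A g]
  arrow := ![f, g]
  arrow_src i := by fin_cases i <;> rfl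
  arrow_tgt i := by fin_cases i; exacts [h, rfl]

def path₃ (f g k : A _⦋1⦌) (hfg : tgt A f = src A g) (hgk : tgt A g = src A k) :
    Path A 3 where
  vertex := ![src A f, src A g, src A k, tgt A k]
  arrow := ![f, g, k]
  arrow_src i := by fin_cases i <;> rfl
  arrow_tgt i := by fin_cases i; exacts [hfg, hgk, rfl]

lemma path₃_interval_zero (f g k : A _⦋1⦌) (hfg : tgt A f = src A g)
    (hgk : tgt A g = src A k) : (path₃ f g k hfg hgk).interval 0 2 = path₂ f g hfg := by
  ext i; fin_cases i <;> rfl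

lemma path₃_interval_one (f g k : A _⦋1⦌) (hfg : tgt A f = src A g)
    (hgk : tgt A g = src A k) : (path₃ f g k hfg hgk).interval 1 2 = path₂ g k hgk := by
  ext i; fin_cases i <;> rfl

lemma spine_eq_path₂_iff (σ : A _⦋2⦌) (f g : A _⦋1⦌) (h : tgt A f = src A g) :
    A.spine 2 σ = path₂ f g h ↔ A.δ 2 σ = f ∧ A.δ 0 σ = g := by
  rw [SimplicialObject.δ_def, SimplicialObject.δ_def, ← mkOfSucc_zero_eq_δ,
    ← mkOfSucc_one_eq_δ]
  constructor
  · intro hσ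
    exact ⟨Path.congr_arrow hσ 0, Path.congr_arrow hσ 1⟩
  · rintro ⟨hf, hg⟩
    ext i; fin_cases i; exacts [hf, hg]

lemma src_ide (a : A _⦋0⦌) : src A (ide A a) = a := A.δ_comp_σ_succ_apply 0 a

lemma tgt_ide (a : A _⦋0⦌) : tgt A (ide A a) = a := A.δ_comp_σ_self_apply 0 a

variable (sx : StrictSegal A)

def comp (f g : A _⦋1⦌) (h : tgt A f = src A g) : A _⦋1⦌ :=
  sx.spineToDiagonal (path₂ f g h)

lemma comp_eq_δ_one_of_spine_eq {f g : A _⦋1⦌} (h : tgt A f = src A g) {σ : A _⦋2⦌}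
    (hσ : A.spine 2 σ = path₂ f g h) : comp sx f g h = A.δ 1 σ := by
  rw [comp, StrictSegal.spineToDiagonal, ← hσ, sx.spineToSimplex_spine_apply,
    SimplicialObject.diagonal, diag_two_eq_δ_one]
  rfl

lemma exists_δ_eq_comp (f g : A _⦋1⦌) (h : tgt A f = src A g) :
    ∃ σ : A _⦋2⦌, A.δ 2 σ = f ∧ A.δ 0 σ = g ∧ A.δ 1 σ = comp sx f g h := by
  have hσ := sx.spine_spineToSimplex_apply (path₂ f g h)
  obtain ⟨hf, hg⟩ := (spine_eq_path₂_iff _ f g h).1 hσ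
  exact ⟨_, hf, hg, (comp_eq_δ_one_of_spine_eq sx h hσ).symm⟩

lemma src_comp (f g : A _⦋1⦌) (h : tgt A f = src A g) : src A (comp sx f g h) = src A f := by
  obtain ⟨σ, hf, -, hσ⟩ := exists_δ_eq_comp sx f g h
  rw [← hσ, ← hf]
  exact A.δ_comp_δ_self_apply (i := 1) σ

lemma tgt_comp (f g : A _⦋1⦌) (h : tgt A f = src A g) : tgt A (comp sx f g h) = tgt A g := by
  obtain ⟨σ, -, hg, hσ⟩ := exists_δ_eq_comp sx f g h
  rw [← hσ, ← hg]
  exact (A.δ_comp_δ_self_apply (i := 0) σ).symm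

lemma ide_comp (f : A _⦋1⦌) (h : tgt A (ide A (src A f)) = src A f) :
    comp sx (ide A (src A f)) f h = f := by
  have hσ : A.spine 2 (A.σ 0 f) = path₂ (ide A (src A f)) f h :=
    (spine_eq_path₂_iff _ _ _ h).2
      ⟨A.δ_comp_σ_of_gt_apply (i := 1) (j := 0) (by decide) f, A.δ_comp_σ_self_apply 0 f⟩
  rw [comp_eq_δ_one_of_spine_eq sx h hσ]
  exact A.δ_comp_σ_succ_apply 0 f

lemma comp_ide (f : A _⦋1⦌) (h : tgt A f = src A (ide A (tgt A f))) :
    comp sx f (ide A (tgt A f)) h = f := by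
  have hσ : A.spine 2 (A.σ 1 f) = path₂ f (ide A (tgt A f)) h :=
    (spine_eq_path₂_iff _ _ _ h).2
      ⟨A.δ_comp_σ_succ_apply 1 f, A.δ_comp_σ_of_le_apply (i := 0) (j := 0) le_rfl f⟩
  rw [comp_eq_δ_one_of_spine_eq sx h hσ]
  exact A.δ_comp_σ_self_apply 1 f

lemma comp_assoc (f g k : A _⦋1⦌) (hfg : tgt A f = src A g) (hgk : tgt A g = src A k)
    (h₁ : tgt A (comp sx f g hfg) = src A k) (h₂ : tgt A f = src A (comp sx g k hgk)) :
    comp sx (comp sx f g hfg) k h₁ = comp sx f (comp sx g k hgk) h₂ := by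
  let p := path₃ f g k hfg hgk
  have hτ₁ : A.spine 2 (A.δ 1 (sx.spineToSimplex p)) = path₂ (comp sx f g hfg) k h₁ := by
    ext i; fin_cases i
    · exact (sx.spine_δ_arrow_eq p (i := 0) (j := 1) rfl).trans
        (congrArg sx.spineToDiagonal (path₃_interval_zero f g k hfg hgk))
    · exact sx.spine_δ_arrow_gt p (by decide)
  have hτ₂ : A.spine 2 (A.δ 2 (sx.spineToSimplex p)) = path₂ f (comp sx g k hgk) h₂ := by
    ext i; fin_cases i
    · exact sx.spine_δ_arrow_lt p (by decide)
    · exact (sx.spine_δ_arrow_eq p (i := 1) (j := 2) rfl).trans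
        (congrArg sx.spineToDiagonal (path₃_interval_one f g k hfg hgk))
  rw [comp_eq_δ_one_of_spine_eq sx h₁ hτ₁, comp_eq_δ_one_of_spine_eq sx h₂ hτ₂]
  exact A.δ_comp_δ_self_apply (i := 1) _

end Composition

theorem segal_implies_category
    (hA : ∀ k : ℕ, Function.Bijective (A.spine k)) :
    ∃ comp : ∀ f g : A _⦋1⦌, tgt A f = src A g → A _⦋1⦌,
      -- `comp f g` is `d₁` of the (unique) `2`-simplex whose spine is `(f, g)`,
      -- i.e. it is obtained from `(f, g)` via the inverse of the Segal map `S₂`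
      -- followed by the face map `d₁`:
      (∀ (f g : A _⦋1⦌) (h : tgt A f = src A g), ∃ σ₂ : A _⦋2⦌,
          A.map (SimplexCategory.δ (2 : Fin 3)).op σ₂ = f ∧
          A.map (SimplexCategory.δ (0 : Fin 3)).op σ₂ = g ∧
          A.map (SimplexCategory.δ (1 : Fin 3)).op σ₂ = comp f g h) ∧
      -- sources and targets of composites:
      (∀ (f g : A _⦋1⦌) (h : tgt A f = src A g),
          src A (comp f g h) = src A f ∧ tgt A (comp f g h) = tgt A g) ∧
      -- sources and targets of identities:
      (∀ a : A _⦋0⦌, src A (ide A a) = a ∧ tgt A (ide A a) = a) ∧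
      -- left unit law:
      (∀ (f : A _⦋1⦌) (h : tgt A (ide A (src A f)) = src A f),
          comp (ide A (src A f)) f h = f) ∧
      -- right unit law:
      (∀ (f : A _⦋1⦌) (h : tgt A f = src A (ide A (tgt A f))),
          comp f (ide A (tgt A f)) h = f) ∧
      -- associativity:
      (∀ (f g h : A _⦋1⦌) (hfg : tgt A f = src A g) (hgh : tgt A g = src A h)
          (h₁ : tgt A (comp f g hfg) = src A h) (h₂ : tgt A f = src A (comp g h hgh)),
          comp (comp f g hfg) h h₁ = comp f (comp g h hgh) h₂)  := by
  have : A.IsStrictSegal := ⟨hA⟩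
  let sx := StrictSegal.ofIsStrictSegal A
  exact ⟨comp sx, exists_δ_eq_comp sx, fun f g h => ⟨src_comp sx f g h, tgt_comp sx f g h⟩,
    fun a => ⟨src_ide a, tgt_ide a⟩, ide_comp sx, comp_ide sx, comp_assoc sx⟩

end SegalStmt
end
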